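/- If g : [a,b] → ℝ is Riemann integrable, G(t) := c + ∫_a^t g, f is bounded on the range of G, and (f ∘ G)·g is Riemann integrable on [a,b], then f is Riemann integrable on the range of G and ∫_{G(a)}^{G(b)} f = ∫_a^b (f ∘ G)·g. -/

import Mathlib

open MeasureTheory Set

/-- Riemann integrability of a bounded function on a set, via the Lebesgue criterion:
`f` is bounded on `s` and continuous (within `s`) at almost every point of `s`. -/
def RiemannIntegrableOn (f : ℝ → ℝ) (s : Set ℝ) : Prop :=
  (∃ C : ℝ, ∀ x ∈ s, |f x| ≤ C) ∧
    ∀ᵐ x ∂(volume.restrict s), ContinuousWithinAt f s x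

/-!
Where `g` and `(f ∘ G) * g` are continuous at an interior point `t` and `g t ≠ 0`, `G` has the
nonzero strict derivative `g t`, hence maps neighbourhoods of `t` onto neighbourhoods of `G t`,
and `f = ((f ∘ G) * g / g) ∘ G⁻¹` is continuous at `G t`. Every other point of `G '' [a, b]` is the
image under the Lipschitz map `G` of a null set, or a critical value of `G`; both sets are null.

For the integral, let `F` be a primitive of `f` (extended by zero off `G '' [a, b]`). Then
`F ∘ G` is Lipschitz, hence absolutely continuous, and has derivative `(f ∘ G) * g` almost
everywhere: by the chain rule where `g t ≠ 0`, and because `F` is Lipschitz where `g t = 0`.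
-/

open Filter Topology intervalIntegral
open scoped NNReal Interval

theorem aestronglyMeasurable_of_ae_continuousWithinAt {α β : Type*} [TopologicalSpace α]
    [MeasurableSpace α] [OpensMeasurableSpace α] [TopologicalSpace β]
    [TopologicalSpace.PseudoMetrizableSpace β] [SecondCountableTopologyEither α β]
    {μ : Measure α} {f : α → β} {s : Set α} (hs : MeasurableSet s)
    (hf : ∀ᵐ x ∂μ.restrict s, ContinuousWithinAt f s x) :
    AEStronglyMeasurable f (μ.restrict s) := by
  obtain ⟨u, hbad, hu, hu0⟩ := exists_measurable_superset_of_null hf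
  have hcont : ContinuousOn f (s \ u) := fun x hx =>
    (not_not.1 fun h => hx.2 (hbad h)).mono sdiff_subset
  have hsu : s \ u =ᵐ[μ] s :=
    sdiff_ae_eq_self.2 (by rwa [Measure.restrict_apply hu, inter_comm] at hu0)
  exact Measure.restrict_congr_set hsu ▸ hcont.aestronglyMeasurable (hs.diff hu)

theorem RiemannIntegrableOn.integrableOn {f : ℝ → ℝ} {s : Set ℝ} (hf : RiemannIntegrableOn f s)
    (hs : MeasurableSet s) (hs' : volume s ≠ ⊤) : IntegrableOn f s := by
  obtain ⟨⟨C, hC⟩, hcont⟩ := hf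
  exact (integrableOn_const (C := C) hs').mono'
    (aestronglyMeasurable_of_ae_continuousWithinAt hs hcont)
    ((ae_restrict_iff' hs).2 (ae_of_all _ hC))

theorem RiemannIntegrableOn.ae_continuousAt {f : ℝ → ℝ} {a b : ℝ}
    (hf : RiemannIntegrableOn f (Icc a b)) :
    ∀ᵐ x, x ∈ Icc a b → x ∈ Ioo a b ∧ ContinuousAt f x := by
  have hIoo : ∀ᵐ x ∂volume.restrict (Icc a b), x ∈ Ioo a b := by
    rw [← Measure.restrict_congr_set Ioo_ae_eq_Icc]
    exact ae_restrict_mem measurableSet_Ioo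
  rw [← ae_restrict_iff' measurableSet_Icc]
  filter_upwards [hf.2, hIoo] with x hx hxI
  exact ⟨hxI, hx.continuousAt (Icc_mem_nhds hxI.1 hxI.2)⟩

theorem LipschitzOnWith.volume_image_null {f : ℝ → ℝ} {K : ℝ≥0} {s : Set ℝ}
    (hf : LipschitzOnWith K f s) (hs : volume s = 0) : volume (f '' s) = 0 := by
  simpa [hausdorffMeasure_real, hs] using hf.hausdorffMeasure_image_le zero_le_one

theorem volume_image_null_of_hasDerivWithinAt_zero {f : ℝ → ℝ} {s : Set ℝ}
    (hf : ∀ x ∈ s, HasDerivWithinAt f 0 s x) : volume (f '' s) = 0 :=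
  addHaar_image_eq_zero_of_det_fderivWithin_eq_zero volume (f' := fun _ => 0)
    (fun x hx => by simpa using (hf x hx).hasFDerivWithinAt)
    (fun _ _ => LinearMap.det_zero' (Module.Basis.singleton Unit ℝ))

theorem lipschitzOnWith_of_sub_eq_integral {E : Type*} [NormedAddCommGroup E] [NormedSpace ℝ E]
    {F φ : ℝ → E} {s : Set ℝ} {C : ℝ≥0} (hs : s.OrdConnected) (hC : ∀ x ∈ s, ‖φ x‖ ≤ C)
    (hF : ∀ u ∈ s, ∀ v ∈ s, F v - F u = ∫ x in u..v, φ x) : LipschitzOnWith C F s := by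
  refine LipschitzOnWith.of_dist_le_mul fun u hu v hv => ?_
  rw [dist_eq_norm, hF v hv u hu, Real.dist_eq]
  exact norm_integral_le_of_norm_le_const fun x hx =>
    hC x (hs.uIcc_subset hv hu (uIoc_subset_uIcc hx))

theorem lipschitzWith_integral {E : Type*} [NormedAddCommGroup E] [NormedSpace ℝ E] {φ : ℝ → E}
    {C : ℝ≥0} (hφ : Integrable φ) (hC : ∀ x, ‖φ x‖ ≤ C) (y₀ : ℝ) :
    LipschitzWith C (fun y => ∫ x in y₀..y, φ x) :=
  lipschitzOnWith_univ.1 <| lipschitzOnWith_of_sub_eq_integral ordConnected_univ (fun x _ => hC x)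
    fun _ _ _ _ => integral_interval_sub_left hφ.intervalIntegrable hφ.intervalIntegrable

theorem LipschitzWith.hasDerivAt_comp_of_hasDerivAt_zero {𝕜 E E' : Type*}
    [NontriviallyNormedField 𝕜] [NormedAddCommGroup E] [NormedSpace 𝕜 E]
    [NormedAddCommGroup E'] [NormedSpace 𝕜 E'] {F : E → E'} {G : 𝕜 → E} {K : ℝ≥0} {t : 𝕜}
    (hF : LipschitzWith K F) (hG : HasDerivAt G 0 t) : HasDerivAt (fun s => F (G s)) 0 t := by
  rw [hasDerivAt_iff_isLittleO] at hG ⊢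
  simp only [smul_zero, sub_zero] at hG ⊢
  refine Asymptotics.IsBigO.trans_isLittleO (.of_bound K (.of_forall fun s => ?_)) hG
  simpa only [← dist_eq_norm] using hF.dist_le_mul (G s) (G t)

theorem HasStrictDerivAt.continuousAt_of_continuousAt_comp {𝕜 X : Type*}
    [NontriviallyNormedField 𝕜] [CompleteSpace 𝕜] [TopologicalSpace X] {f : 𝕜 → X} {G : 𝕜 → 𝕜}
    {g' t : 𝕜} (hG : HasStrictDerivAt G g' t) (hg' : g' ≠ 0)
    (hfG : ContinuousAt (fun s => f (G s)) t) : ContinuousAt f (G t) := by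
  rw [ContinuousAt, ← hG.map_nhds_eq hg', tendsto_map'_iff]
  exact hfG

theorem hasDerivAt_integral_comp {φ G : ℝ → ℝ} {C : ℝ≥0} {y₀ t g' : ℝ} (hφ : Integrable φ)
    (hC : ∀ x, ‖φ x‖ ≤ C) (hG : HasStrictDerivAt G g' t) (hφG : g' ≠ 0 → ContinuousAt φ (G t)) :
    HasDerivAt (fun s => ∫ x in y₀..G s, φ x) (φ (G t) * g') t := by
  by_cases hg' : g' = 0
  · subst hg'
    simpa using (lipschitzWith_integral hφ hC y₀).hasDerivAt_comp_of_hasDerivAt_zero hG.hasDerivAt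
  · exact (integral_hasDerivAt_right hφ.intervalIntegrable
      hφ.aestronglyMeasurable.stronglyMeasurableAtFilter (hφG hg')).comp t hG.hasDerivAt

theorem continuousAt_of_continuousAt_comp_mul {f G g : ℝ → ℝ} {t : ℝ}
    (hG : HasStrictDerivAt G (g t) t) (hgt : ContinuousAt g t) (hg0 : g t ≠ 0)
    (hfg : ContinuousAt (fun s => f (G s) * g s) t) : ContinuousAt f (G t) := by
  refine hG.continuousAt_of_continuousAt_comp hg0 ((hfg.div hgt hg0).congr ?_)
  filter_upwards [hgt.eventually_ne hg0] with s hs using mul_div_cancel_right₀ _ hs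

section Primitive

variable {a b c : ℝ} {g G f : ℝ → ℝ}

theorem lipschitzOnWith_of_eq_primitive {C : ℝ} (hg : IntegrableOn g (Icc a b))
    (hC : ∀ x ∈ Icc a b, |g x| ≤ C) (hG : ∀ t ∈ Icc a b, G t = c + ∫ x in a..t, g x) :
    LipschitzOnWith C.toNNReal G (Icc a b) := by
  refine lipschitzOnWith_of_sub_eq_integral ordConnected_Icc
    (fun x hx => (hC x hx).trans (Real.le_coe_toNNReal C)) fun u hu v hv => ?_
  have hint : ∀ w ∈ Icc a b, IntervalIntegrable g volume a w := fun w hw =>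
    (hg.mono_set (uIcc_subset_Icc (left_mem_Icc.2 (hu.1.trans hu.2)) hw)).intervalIntegrable
  rw [hG u hu, hG v hv, add_sub_add_left_eq_sub, integral_interval_sub_left (hint v hv) (hint u hu)]

theorem hasStrictDerivAt_of_eq_primitive {t : ℝ} (hg : IntegrableOn g (Icc a b))
    (hG : ∀ t ∈ Icc a b, G t = c + ∫ x in a..t, g x) (ht : t ∈ Ioo a b) (hgt : ContinuousAt g t) :
    HasStrictDerivAt G (g t) t := by
  have hI : Icc a b ∈ 𝓝 t := Icc_mem_nhds ht.1 ht.2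
  refine ((integral_hasStrictDerivAt_right (a := a) ?_ ?_ hgt).const_add c).congr_of_eventuallyEq ?_
  · exact (hg.mono_set (uIcc_subset_Icc (left_mem_Icc.2 (ht.1.le.trans ht.2.le))
      (Ioo_subset_Icc_self ht))).intervalIntegrable
  · exact AEStronglyMeasurable.stronglyMeasurableAtFilter_of_mem hg.aestronglyMeasurable hI
  · filter_upwards [hI] with s hs using (hG s hs).symm

theorem RiemannIntegrableOn.image_of_comp_mul (hg : RiemannIntegrableOn g (Icc a b))
    (hG : ∀ t ∈ Icc a b, G t = c + ∫ x in a..t, g x)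
    (hfbd : ∃ C : ℝ, ∀ y ∈ G '' Icc a b, |f y| ≤ C)
    (hfg : RiemannIntegrableOn (fun t => f (G t) * g t) (Icc a b)) :
    RiemannIntegrableOn f (G '' Icc a b) := by
  have hgi := hg.integrableOn measurableSet_Icc measure_Icc_lt_top.ne
  obtain ⟨Cg, hCg⟩ := hg.1
  have hGLip := lipschitzOnWith_of_eq_primitive hgi hCg hG
  have hJ : MeasurableSet (G '' Icc a b) :=
    (isCompact_Icc.image_of_continuousOn hGLip.continuousOn).isClosed.measurableSet
  set good := fun t => t ∈ Ioo a b ∧ ContinuousAt g t ∧ ContinuousAt (fun s => f (G s) * g s) t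
  have hgood : ∀ᵐ t, t ∈ Icc a b → good t := by
    filter_upwards [hg.ae_continuousAt, hfg.ae_continuousAt] with t hgt hfgt ht
    exact ⟨(hgt ht).1, (hgt ht).2, (hfgt ht).2⟩
  have hbad : volume (G '' {t | t ∈ Icc a b ∧ ¬good t}) = 0 :=
    (hGLip.mono fun t ht => ht.1).volume_image_null
      (by simpa only [ae_iff, Classical.not_imp] using hgood)
  have hcrit : volume (G '' {t | good t ∧ g t = 0}) = 0 :=
    volume_image_null_of_hasDerivWithinAt_zero fun t ht =>
      (ht.2 ▸ (hasStrictDerivAt_of_eq_primitive hgi hG ht.1.1 ht.1.2.1).hasDerivAt).hasDerivWithinAt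
  refine ⟨hfbd, (ae_restrict_iff' hJ).2 (measure_mono_null ?_ (measure_union_null hbad hcrit))⟩
  intro y hy
  obtain ⟨⟨t, ht, rfl⟩, hdisc⟩ := Classical.not_imp.1 hy
  by_cases hgt : good t
  · by_cases hg0 : g t = 0
    · exact Or.inr ⟨t, ⟨hgt, hg0⟩, rfl⟩
    · exact absurd (continuousAt_of_continuousAt_comp_mul
        (hasStrictDerivAt_of_eq_primitive hgi hG hgt.1 hgt.2.1) hgt.2.1 hg0
        hgt.2.2).continuousWithinAt hdisc
  · exact Or.inl ⟨t, ⟨ht, hgt⟩, rfl⟩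

theorem integral_comp_mul_eq_of_eq_primitive (hab : a ≤ b) (hg : RiemannIntegrableOn g (Icc a b))
    (hG : ∀ t ∈ Icc a b, G t = c + ∫ x in a..t, g x) (hf : RiemannIntegrableOn f (G '' Icc a b))
    (hfg : RiemannIntegrableOn (fun t => f (G t) * g t) (Icc a b)) :
    ∫ y in G a..G b, f y = ∫ t in a..b, f (G t) * g t := by
  set J := G '' Icc a b
  have hgi := hg.integrableOn measurableSet_Icc measure_Icc_lt_top.ne
  obtain ⟨Cg, hCg⟩ := hg.1
  have hGLip := lipschitzOnWith_of_eq_primitive hgi hCg hG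
  have hJc : IsCompact J := isCompact_Icc.image_of_continuousOn hGLip.continuousOn
  set φ := J.indicator f
  have hφ : Integrable φ := (integrable_indicator_iff hJc.isClosed.measurableSet).2
    (hf.integrableOn hJc.isClosed.measurableSet hJc.measure_lt_top.ne)
  obtain ⟨C, hC⟩ := hf.1
  have hφC : ∀ y, ‖φ y‖ ≤ C.toNNReal := by
    intro y
    by_cases hy : y ∈ J
    · simpa [φ, hy] using (hC y hy).trans (Real.le_coe_toNNReal C)
    · simp [φ, hy]
  set H := fun s => ∫ x in G a..G s, φ x
  have hH : ∀ᵐ t, t ∈ Ι a b → HasDerivAt H (f (G t) * g t) t := by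
    filter_upwards [hg.ae_continuousAt, hfg.ae_continuousAt] with t hgt hfgt ht
    have htI : t ∈ Icc a b := Ioc_subset_Icc_self (uIoc_of_le hab ▸ ht)
    have hGt := hasStrictDerivAt_of_eq_primitive hgi hG (hgt htI).1 (hgt htI).2
    have hφG : g t ≠ 0 → ContinuousAt φ (G t) := fun hg0 => by
      have hJ : J ∈ 𝓝 (G t) :=
        hGt.map_nhds_eq hg0 ▸ image_mem_map (Icc_mem_nhds (hgt htI).1.1 (hgt htI).1.2)
      refine (continuousAt_of_continuousAt_comp_mul hGt (hgt htI).2 hg0 (hfgt htI).2).congr ?_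
      filter_upwards [hJ] with y hy using (indicator_of_mem hy f).symm
    have hφGt : φ (G t) = f (G t) := indicator_of_mem (mem_image_of_mem G htI) f
    exact hφGt ▸ hasDerivAt_integral_comp hφ hφC hGt hφG
  have hHAC : AbsolutelyContinuousOnInterval H a b :=
    ((lipschitzWith_integral hφ hφC (G a)).comp_lipschitzOnWith
      (hGLip.mono (uIcc_of_le hab).subset)).absolutelyContinuousOnInterval
  calc ∫ y in G a..G b, f y = H b - H a := by
        simp only [H, integral_same, sub_zero]
        refine integral_congr fun y hy => (indicator_of_mem ?_ f).symm
        exact (isPreconnected_Icc.image G hGLip.continuousOn).ordConnected.uIcc_subset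
          (mem_image_of_mem G (left_mem_Icc.2 hab)) (mem_image_of_mem G (right_mem_Icc.2 hab)) hy
    _ = ∫ t in a..b, deriv H t := hHAC.integral_deriv_eq_sub.symm
    _ = ∫ t in a..b, f (G t) * g t := integral_congr_ae (hH.mono fun t h ht => (h ht).deriv)

end Primitive

/-- The Preiss–Uher converse to Kestelman's change of variables theorem. -/
theorem preiss_uher_converse (a b c : ℝ) (hab : a ≤ b)
    (g G f : ℝ → ℝ)
    (hg : RiemannIntegrableOn g (Icc a b))
    (hG : ∀ t ∈ Icc a b, G t = c + ∫ x in a..t, g x)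
    (hfbd : ∃ C : ℝ, ∀ y ∈ G '' Icc a b, |f y| ≤ C)
    (hfg : RiemannIntegrableOn (fun t => f (G t) * g t) (Icc a b)) :
    RiemannIntegrableOn f (G '' Icc a b) ∧
      ∫ y in G a..G b, f y = ∫ t in a..b, f (G t) * g t := by
  have hf := hg.image_of_comp_mul hG hfbd hfg
  exact ⟨hf, integral_comp_mul_eq_of_eq_primitive hab hg hG hf hfg⟩
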